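/- Let d ≥ 3 be an integer, let I ⊆ (0,∞) be an open interval, and let q_+, q_- : I → (0,1) be differentiable functions satisfying q_-(λ) = F_λ(q_+(λ)) and q_+(λ) = F_λ(q_-(λ)) for all λ ∈ I. Then for all λ ∈ I, d/dλ [Φ_λ(q_+(λ), q_-(λ))] = (1/2)[ q_+(λ)^d/(1 + λ q_+(λ)^d) + q_-(λ)^d/(1 + λ q_-(λ)^d) ]. -/

import Mathlib

/-!
Envelope argument: the BP fixed-point equations are exactly the stationarity conditions
`∂Φ_λ/∂a = ∂Φ_λ/∂b = 0`, because `b (1 + λ a^{d-1}) = 1` gives `b (1 + λ a^d) = a + b - ab`.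
Hence along a differentiable family of fixed points only the explicit dependence of `Φ_λ` on `λ`
contributes to the derivative.
-/

open Set

/-- The hard-core belief-propagation map `F_λ(q) = 1/(1 + λ q^{d-1})`. -/
noncomputable def hcF (d : ℕ) (lam q : ℝ) : ℝ := 1 / (1 + lam * q ^ (d - 1))

/-- The bipartite hard-core Bethe free energy functional. -/
noncomputable def hcPhi (d : ℕ) (lam a b : ℝ) : ℝ :=
  (1/2) * Real.log (1 + lam * a ^ d) + (1/2) * Real.log (1 + lam * b ^ d)
    - ((d:ℝ)/2) * Real.log (a + b - a * b)

/-- `∂Φ_λ/∂a (a, b)`; by symmetry of `hcPhi`, `∂Φ_λ/∂b (a, b) = hcPhiPartial d lam b a`. -/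
noncomputable def hcPhiPartial (d : ℕ) (lam a b : ℝ) : ℝ :=
  (d / 2) * (lam * a ^ (d - 1) / (1 + lam * a ^ d) - (1 - b) / (a + b - a * b))

theorem hasDerivAt_hcPhi_comp {d : ℕ} {qp qm : ℝ → ℝ} {qp' qm' lam : ℝ}
    (hp : HasDerivAt qp qp' lam) (hm : HasDerivAt qm qm' lam)
    (hP : 1 + lam * qp lam ^ d ≠ 0) (hQ : 1 + lam * qm lam ^ d ≠ 0)
    (hR : qp lam + qm lam - qp lam * qm lam ≠ 0) :
    HasDerivAt (fun l => hcPhi d l (qp l) (qm l))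
      ((1 / 2) * (qp lam ^ d / (1 + lam * qp lam ^ d) + qm lam ^ d / (1 + lam * qm lam ^ d))
        + hcPhiPartial d lam (qp lam) (qm lam) * qp' + hcPhiPartial d lam (qm lam) (qp lam) * qm')
      lam := by
  have hlogP := (((hasDerivAt_id' lam).mul (hp.fun_pow d)).const_add 1).log hP
  have hlogQ := (((hasDerivAt_id' lam).mul (hm.fun_pow d)).const_add 1).log hQ
  have hlogR := ((hp.add hm).sub (hp.mul hm)).log hR
  refine (((hlogP.const_mul (1 / 2)).add (hlogQ.const_mul (1 / 2))).sub
    (hlogR.const_mul ((d : ℝ) / 2))).congr_deriv ?_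
  simp only [hcPhiPartial, Pi.mul_apply, Pi.add_apply, Pi.sub_apply]
  rw [show qm lam + qp lam - qm lam * qp lam = qp lam + qm lam - qp lam * qm lam by ring]
  ring

section FixedPoint

variable {d : ℕ} {lam a b : ℝ}

theorem mul_one_add_mul_pow_pred_of_eq_hcF (hb : b ≠ 0) (h : b = hcF d lam a) :
    b * (1 + lam * a ^ (d - 1)) = 1 := by
  have hF : 1 + lam * a ^ (d - 1) ≠ 0 := by
    rintro hF
    exact hb (by simp [h, hcF, hF])
  rw [h, hcF]
  field_simp

theorem mul_one_add_mul_pow_of_eq_hcF (hd : 1 ≤ d) (hb : b ≠ 0) (h : b = hcF d lam a) :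
    b * (1 + lam * a ^ d) = a + b - a * b := by
  have hbF := mul_one_add_mul_pow_pred_of_eq_hcF hb h
  obtain ⟨k, rfl⟩ : ∃ k, d = k + 1 := ⟨d - 1, by omega⟩
  rw [Nat.add_sub_cancel] at hbF
  linear_combination a * hbF

theorem one_add_mul_pow_ne_zero_of_eq_hcF (hd : 1 ≤ d) (hb : b ≠ 0) (hR : a + b - a * b ≠ 0)
    (h : b = hcF d lam a) : 1 + lam * a ^ d ≠ 0 :=
  right_ne_zero_of_mul (mul_one_add_mul_pow_of_eq_hcF hd hb h ▸ hR)

theorem hcPhiPartial_eq_zero_of_eq_hcF (hd : 1 ≤ d) (hb : b ≠ 0) (hR : a + b - a * b ≠ 0)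
    (h : b = hcF d lam a) : hcPhiPartial d lam a b = 0 := by
  have hbF := mul_one_add_mul_pow_pred_of_eq_hcF hb h
  have hbP := mul_one_add_mul_pow_of_eq_hcF hd hb h
  have hnum : lam * a ^ (d - 1) * (a + b - a * b) - (1 + lam * a ^ d) * (1 - b) = 0 := by
    linear_combination (-(lam * a ^ (d - 1))) * hbP + (1 + lam * a ^ d) * hbF
  rw [hcPhiPartial, div_sub_div _ _ (one_add_mul_pow_ne_zero_of_eq_hcF hd hb hR h) hR, hnum,
    zero_div, mul_zero]

end FixedPoint

theorem stmt8_general (d : ℕ) (hd : 3 ≤ d) (I : Set ℝ)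
    (qp qm : ℝ → ℝ)
    (hrange : ∀ lam ∈ I, qp lam ∈ Ioo (0:ℝ) 1 ∧ qm lam ∈ Ioo (0:ℝ) 1)
    (hdiff : ∀ lam ∈ I, DifferentiableAt ℝ qp lam ∧ DifferentiableAt ℝ qm lam)
    (hbp : ∀ lam ∈ I, qm lam = hcF d lam (qp lam) ∧ qp lam = hcF d lam (qm lam)) :
    ∀ lam ∈ I,
      HasDerivAt (fun l => hcPhi d l (qp l) (qm l))
        ((1/2) * ((qp lam) ^ d / (1 + lam * (qp lam) ^ d)
          + (qm lam) ^ d / (1 + lam * (qm lam) ^ d))) lam := by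
  intro lam hlam
  obtain ⟨⟨ha0, ha1⟩, hb0, hb1⟩ := hrange lam hlam
  obtain ⟨hmp, hpm⟩ := hbp lam hlam
  have hd1 : 1 ≤ d := by omega
  have hR : qp lam + qm lam - qp lam * qm lam ≠ 0 := by nlinarith
  have hR' : qm lam + qp lam - qm lam * qp lam ≠ 0 := by rwa [add_comm, mul_comm]
  convert hasDerivAt_hcPhi_comp (hdiff lam hlam).1.hasDerivAt (hdiff lam hlam).2.hasDerivAt
    (one_add_mul_pow_ne_zero_of_eq_hcF hd1 hb0.ne' hR hmp)
    (one_add_mul_pow_ne_zero_of_eq_hcF hd1 ha0.ne' hR' hpm) hR using 1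
  rw [hcPhiPartial_eq_zero_of_eq_hcF hd1 hb0.ne' hR hmp,
    hcPhiPartial_eq_zero_of_eq_hcF hd1 ha0.ne' hR' hpm]
  ring

theorem stmt8 (d : ℕ) (hd : 3 ≤ d) (I : Set ℝ)
    (hI : ∃ a b : ℝ, I = Ioo a b) (hIpos : I ⊆ Ioi 0)
    (qp qm : ℝ → ℝ)
    (hrange : ∀ lam ∈ I, qp lam ∈ Ioo (0:ℝ) 1 ∧ qm lam ∈ Ioo (0:ℝ) 1)
    (hdiff : ∀ lam ∈ I, DifferentiableAt ℝ qp lam ∧ DifferentiableAt ℝ qm lam)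
    (hbp : ∀ lam ∈ I, qm lam = hcF d lam (qp lam) ∧ qp lam = hcF d lam (qm lam)) :
    ∀ lam ∈ I,
      HasDerivAt (fun l => hcPhi d l (qp l) (qm l))
        ((1/2) * ((qp lam) ^ d / (1 + lam * (qp lam) ^ d)
          + (qm lam) ^ d / (1 + lam * (qm lam) ^ d))) lam :=
  stmt8_general d hd I qp qm hrange hdiff hbp
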